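/- Let I = ⟨σ¹,…,σⁿ⟩_alg be the algebraic ideal generated by 1-forms σ^k = θ^k_α ē^α + ϖ^k_μ Ē^μ on the prolongation Lie algebroid Ā. If I is a differential ideal, then for any solution ȳ^μ(x) of the PDE system θ^k_α(x,ȳ) + ρ^i_α (∂ȳ^μ/∂x^i) ϖ^k_μ(x,ȳ) = 0, the dependency condition 0 = −Y_α(θ^k_β) − X_β(ȳ^μ)Y_α(ϖ^k_μ) + Y_β(θ^k_α) + X_α(ȳ^μ)Y_β(ϖ^k_μ) + L^γ_{αβ} θ^k_γ holds identically, where X_α = ρ^i_α ∂/∂x^i and Y_α = X_α + X_α(ȳ^ν) ∂/∂y^ν. -/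

import Mathlib

open scoped BigOperators

noncomputable section

/-- Points of `M̄`, with coordinates `(x^i, y^μ)`. -/
abbrev Pt (n m : ℕ) := (Fin n → ℝ) × (Fin m → ℝ)

/-- Partial derivative `∂f/∂x^i`. -/
def pdx {n m : ℕ} (f : Pt n m → ℝ) (i : Fin n) (z : Pt n m) : ℝ :=
  fderiv ℝ f z (Pi.single i 1, 0)

/-- Partial derivative `∂f/∂y^μ`. -/
def pdy {n m : ℕ} (f : Pt n m → ℝ) (μ : Fin m) (z : Pt n m) : ℝ :=
  fderiv ℝ f z (0, Pi.single μ 1)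

/-- The anchor `ρ̄` of the prolongation Lie algebroid `Ā`, as a differential
operator, evaluated on the basis sections: `ρ̄(ē_α) = ρ^i_α ∂/∂x^i`,
`ρ̄(Ē_μ) = ∂/∂y^μ`. -/
def Dop {n m N : ℕ} (rc : Fin N → Fin n → (Fin n → ℝ) → ℝ) :
    (Fin N ⊕ Fin m) → (Pt n m → ℝ) → Pt n m → ℝ
  | Sum.inl α => fun f z => ∑ i, rc α i z.1 * pdx f i z
  | Sum.inr μ => fun f z => pdy f μ z

/-- The 1-form `σ^k = θ^k_α ē^α + ϖ^k_μ Ē^μ`, as a function on the basis sections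
`{ē_α, Ē_μ}` of `Ā`. -/
def sigv {n m N K : ℕ} (θc : Fin K → Fin N → Pt n m → ℝ)
    (ϖc : Fin K → Fin m → Pt n m → ℝ) (k : Fin K) :
    (Fin N ⊕ Fin m) → Pt n m → ℝ
  | Sum.inl α => θc k α
  | Sum.inr μ => ϖc k μ

/-- `σ^k` applied to the bracket of two basis sections of `Ā`:
`⟦ē_α, ē_β⟧ = L^γ_{αβ} ē_γ`, all other brackets between basis sections vanish. -/
def sigbr {n m N K : ℕ} (L : Fin N → Fin N → Fin N → (Fin n → ℝ) → ℝ)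
    (θc : Fin K → Fin N → Pt n m → ℝ) (k : Fin K) :
    (Fin N ⊕ Fin m) → (Fin N ⊕ Fin m) → Pt n m → ℝ
  | Sum.inl α, Sum.inl β => fun z => ∑ γ, L α β γ z.1 * θc k γ z
  | _, _ => fun _ => 0

/-- The Koszul formula for `δσ^k`, evaluated on two basis sections of `Ā`. -/
def dsig {n m N K : ℕ} (rc : Fin N → Fin n → (Fin n → ℝ) → ℝ)
    (L : Fin N → Fin N → Fin N → (Fin n → ℝ) → ℝ)
    (θc : Fin K → Fin N → Pt n m → ℝ) (ϖc : Fin K → Fin m → Pt n m → ℝ)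
    (k : Fin K) (u v : Fin N ⊕ Fin m) (z : Pt n m) : ℝ :=
  Dop rc u (sigv θc ϖc k v) z - Dop rc v (sigv θc ϖc k u) z - sigbr L θc k u v z

/-- The 1-form `ν^k_l = ν^k_{lα} ē^α + ν^k_{lμ} Ē^μ`. -/
def nuv {n m N K : ℕ} (νa : Fin K → Fin K → Fin N → Pt n m → ℝ)
    (νb : Fin K → Fin K → Fin m → Pt n m → ℝ) (k l : Fin K) :
    (Fin N ⊕ Fin m) → Pt n m → ℝ
  | Sum.inl α => νa k l α
  | Sum.inr μ => νb k l μ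

/-- The 2-form `ν^k_l ∧ σ^l` (summed over `l`), evaluated on two basis sections. -/
def nuWedgeSig {n m N K : ℕ} (νa : Fin K → Fin K → Fin N → Pt n m → ℝ)
    (νb : Fin K → Fin K → Fin m → Pt n m → ℝ)
    (θc : Fin K → Fin N → Pt n m → ℝ) (ϖc : Fin K → Fin m → Pt n m → ℝ)
    (k : Fin K) (u v : Fin N ⊕ Fin m) (z : Pt n m) : ℝ :=
  ∑ l, (nuv νa νb k l u z * sigv θc ϖc l v z - nuv νa νb k l v z * sigv θc ϖc l u z)

end

section AuxDC

variable {n m : ℕ} {ybar : (Fin n → ℝ) → Fin m → ℝ}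

/-- Chain rule for the directional derivative of `g ∘ (x ↦ (x, ȳ(x)))`. -/
lemma auxDC_chain {g : Pt n m → ℝ} (hg : ContDiff ℝ (⊤ : ℕ∞) g) (hy : ContDiff ℝ (⊤ : ℕ∞) ybar)
    (x : Fin n → ℝ) (j : Fin n) :
    fderiv ℝ (fun x => g (x, ybar x)) x (Pi.single j 1)
      = pdx g j (x, ybar x)
        + ∑ ν, fderiv ℝ ybar x (Pi.single j 1) ν * pdy g ν (x, ybar x) := by
  have hs : DifferentiableAt ℝ (fun x : Fin n → ℝ => (x, ybar x)) x :=
    DifferentiableAt.prodMk differentiableAt_fun_id (hy.differentiable (by simp) x)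
  have h1 : fderiv ℝ (fun x => g (x, ybar x)) x
      = (fderiv ℝ g (x, ybar x)).comp (fderiv ℝ (fun x : Fin n → ℝ => (x, ybar x)) x) :=
    fderiv_comp x (hg.differentiable (by simp) _) hs
  have h2 : fderiv ℝ (fun x : Fin n → ℝ => (x, ybar x)) x (Pi.single j 1)
      = (Pi.single j 1, fderiv ℝ ybar x (Pi.single j 1)) := by
    rw [DifferentiableAt.fderiv_prodMk differentiableAt_fun_id (hy.differentiable (by simp) x)]
    simp
  rw [h1]
  simp only [ContinuousLinearMap.comp_apply, h2]
  have hw : ((Pi.single j 1 : Fin n → ℝ), fderiv ℝ ybar x (Pi.single j 1))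
      = ((Pi.single j 1 : Fin n → ℝ), (0 : Fin m → ℝ))
        + ∑ ν, fderiv ℝ ybar x (Pi.single j 1) ν
            • ((0 : Fin n → ℝ), (Pi.single ν 1 : Fin m → ℝ)) := by
    rw [Prod.ext_iff]
    constructor
    · simp [Prod.fst_sum]
    · funext l
      simp [Prod.snd_sum, Finset.sum_apply, Pi.single_apply, mul_comm]
  rw [hw, map_add, map_sum]
  simp only [pdx, pdy]
  congr 1
  refine Finset.sum_congr rfl fun ν _ => ?_
  rw [map_smul]
  rfl

/-- Smoothness of `x ↦ (∂ȳ/∂v)^μ(x)`. -/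
lemma auxDC_w_smooth (hy : ContDiff ℝ (⊤ : ℕ∞) ybar) (v : Fin n → ℝ) (μ : Fin m) :
    ContDiff ℝ (⊤ : ℕ∞) (fun x => fderiv ℝ ybar x v μ) :=
  (((ContinuousLinearMap.proj μ).comp
    (ContinuousLinearMap.apply ℝ (Fin m → ℝ) v)).contDiff).comp (hy.fderiv_right (by simp))

/-- Symmetry of second derivatives of `ȳ`. -/
lemma auxDC_symm (hy : ContDiff ℝ (⊤ : ℕ∞) ybar) (x u v : Fin n → ℝ) (μ : Fin m) :
    fderiv ℝ (fun x => fderiv ℝ ybar x v μ) x u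
      = fderiv ℝ (fun x => fderiv ℝ ybar x u μ) x v := by
  set φv : ((Fin n → ℝ) →L[ℝ] (Fin m → ℝ)) →L[ℝ] ℝ :=
    (ContinuousLinearMap.proj μ).comp (ContinuousLinearMap.apply ℝ (Fin m → ℝ) v) with hφv
  set φu : ((Fin n → ℝ) →L[ℝ] (Fin m → ℝ)) →L[ℝ] ℝ :=
    (ContinuousLinearMap.proj μ).comp (ContinuousLinearMap.apply ℝ (Fin m → ℝ) u) with hφu
  have hd : DifferentiableAt ℝ (fderiv ℝ ybar) x :=
    (hy.fderiv_right (m := 1) (WithTop.coe_le_coe.mpr le_top)).differentiable (by simp) x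
  have e1 : fderiv ℝ (fun x => fderiv ℝ ybar x v μ) x
      = φv.comp (fderiv ℝ (fderiv ℝ ybar) x) := by
    rw [show (fun x => fderiv ℝ ybar x v μ) = φv ∘ (fderiv ℝ ybar) from rfl]
    rw [fderiv_comp x φv.differentiableAt hd, φv.fderiv]
  have e2 : fderiv ℝ (fun x => fderiv ℝ ybar x u μ) x
      = φu.comp (fderiv ℝ (fderiv ℝ ybar) x) := by
    rw [show (fun x => fderiv ℝ ybar x u μ) = φu ∘ (fderiv ℝ ybar) from rfl]
    rw [fderiv_comp x φu.differentiableAt hd, φu.fderiv]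
  rw [e1, e2]
  have hsymm : fderiv ℝ (fderiv ℝ ybar) x u v = fderiv ℝ (fderiv ℝ ybar) x v u :=
    (hy.contDiffAt.isSymmSndFDerivAt (by rw [minSmoothness_of_isRCLikeNormedField]; exact WithTop.coe_le_coe.mpr le_top)) u v
  simp only [ContinuousLinearMap.comp_apply, hφv, hφu,
    ContinuousLinearMap.apply_apply, ContinuousLinearMap.proj_apply]
  rw [hsymm]

end AuxDC

open scoped BigOperators

/-- Let `I = ⟨σ¹,…,σⁿ⟩_alg` be the algebraic ideal generated by the
1-forms `σ^k = θ^k_α ē^α + ϖ^k_μ Ē^μ` on the prolongation Lie algebroid `Ā`.  If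
`I` is a differential ideal, then for any solution `ȳ^μ(x)` of the PDE system
`θ^k_α(x,ȳ) + ρ^i_α (∂ȳ^μ/∂x^i) ϖ^k_μ(x,ȳ) = 0`, the dependency condition
`0 = −Y_α(θ^k_β) − X_β(ȳ^μ)Y_α(ϖ^k_μ) + Y_β(θ^k_α) + X_α(ȳ^μ)Y_β(ϖ^k_μ) + L^γ_{αβ} θ^k_γ`
holds identically, where `X_α = ρ^i_α ∂/∂x^i` and `Y_α = X_α + X_α(ȳ^ν) ∂/∂y^ν`
(evaluated along the section `x ↦ (x, ȳ(x))`). -/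
theorem dependency_condition {n m N K : ℕ}
    (rc : Fin N → Fin n → (Fin n → ℝ) → ℝ)
    (L : Fin N → Fin N → Fin N → (Fin n → ℝ) → ℝ)
    (θc : Fin K → Fin N → Pt n m → ℝ) (ϖc : Fin K → Fin m → Pt n m → ℝ)
    (hθ : ∀ k α, ContDiff ℝ (⊤ : ℕ∞) (θc k α)) (hϖ : ∀ k μ, ContDiff ℝ (⊤ : ℕ∞) (ϖc k μ))
    (hrc : ∀ α i, ContDiff ℝ (⊤ : ℕ∞) (rc α i))
    -- the structure identity `ρ^k_γ L^γ_{αβ} = ρ^i_α ∂ρ^k_β/∂x^i − ρ^j_β ∂ρ^k_α/∂x^j`: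
    (hanchor : ∀ (α β : Fin N) (kk : Fin n) (x : Fin n → ℝ),
      (∑ γ, rc γ kk x * L α β γ x)
        = (∑ i, rc α i x * fderiv ℝ (rc β kk) x (Pi.single i 1))
          - (∑ j, rc β j x * fderiv ℝ (rc α kk) x (Pi.single j 1)))
    -- `I` is a differential ideal: `δσ^k = ν^k_l ∧ σ^l` for some 1-forms `ν^k_l`:
    (hdiff : ∃ (νa : Fin K → Fin K → Fin N → Pt n m → ℝ)
        (νb : Fin K → Fin K → Fin m → Pt n m → ℝ),
      ∀ (k : Fin K) (u v : Fin N ⊕ Fin m) (z : Pt n m),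
        dsig rc L θc ϖc k u v z = nuWedgeSig νa νb θc ϖc k u v z)
    -- a solution `ȳ` of the PDE system `I^*σ^k = 0`:
    (ybar : (Fin n → ℝ) → Fin m → ℝ) (hy : ContDiff ℝ (⊤ : ℕ∞) ybar)
    (hPDE : ∀ (k : Fin K) (α : Fin N) (x : Fin n → ℝ),
      θc k α (x, ybar x)
        + (∑ μ, (∑ i, rc α i x * fderiv ℝ ybar x (Pi.single i 1) μ)
            * ϖc k μ (x, ybar x)) = 0) :
    -- the dependency condition:
    ∀ (k : Fin K) (α β : Fin N) (x : Fin n → ℝ),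
      -- abbreviations: `Xy α μ x = X_α(ȳ^μ)(x)`, and
      -- `Yop α g x = (Y_α g)(x, ȳ(x))` for `g` a function on `M̄`
      (fun (Xy : Fin N → Fin m → (Fin n → ℝ) → ℝ)
           (Yop : Fin N → (Pt n m → ℝ) → (Fin n → ℝ) → ℝ) =>
        0 = -(Yop α (θc k β) x)
            - (∑ μ, Xy β μ x * Yop α (ϖc k μ) x)
            + Yop β (θc k α) x
            + (∑ μ, Xy α μ x * Yop β (ϖc k μ) x)
            + ∑ γ, L α β γ x * θc k γ (x, ybar x))
      (fun α μ x => ∑ i, rc α i x * fderiv ℝ ybar x (Pi.single i 1) μ)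
      (fun α g x => (∑ i, rc α i x * pdx g i (x, ybar x))
        + ∑ ν, (∑ i, rc α i x * fderiv ℝ ybar x (Pi.single i 1) ν)
            * pdy g ν (x, ybar x)) := by
  clear hdiff
  intro k α β x₀
  dsimp only
  classical
  -- basic differentiability facts
  have hcomp : ∀ g : Pt n m → ℝ, ContDiff ℝ (⊤ : ℕ∞) g →
      ∀ x, DifferentiableAt ℝ (fun x => g (x, ybar x)) x := fun g hg x =>
    ((hg.comp (contDiff_id.prodMk hy)).differentiable (by simp)) x
  have hwd : ∀ (i : Fin n) (μ : Fin m) (x : Fin n → ℝ),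
      DifferentiableAt ℝ (fun x => fderiv ℝ ybar x (Pi.single i 1) μ) x :=
    fun i μ x => ((auxDC_w_smooth hy _ μ).differentiable (by simp)) x
  have hXyd : ∀ (γ : Fin N) (μ : Fin m) (x : Fin n → ℝ), DifferentiableAt ℝ
      (fun x => ∑ i, rc γ i x * fderiv ℝ ybar x (Pi.single i 1) μ) x :=
    fun γ μ x => DifferentiableAt.fun_sum fun i _ =>
      (((hrc γ i).differentiable (by simp)) x).mul (hwd i μ x)
  -- derivative of `X_γ(ȳ^μ)`
  have hXyD : ∀ (γ : Fin N) (μ : Fin m) (x : Fin n → ℝ) (j : Fin n),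
      fderiv ℝ (fun x => ∑ i, rc γ i x * fderiv ℝ ybar x (Pi.single i 1) μ) x (Pi.single j 1)
        = ∑ i, (fderiv ℝ (rc γ i) x (Pi.single j 1) * fderiv ℝ ybar x (Pi.single i 1) μ
            + rc γ i x * fderiv ℝ (fun x => fderiv ℝ ybar x (Pi.single i 1) μ) x
                (Pi.single j 1)) := by
    intro γ μ x j
    rw [fderiv_fun_sum fun i _ => (((hrc γ i).differentiable (by simp)) x).fun_mul (hwd i μ x),
      ContinuousLinearMap.sum_apply]
    refine Finset.sum_congr rfl fun i _ => ?_
    rw [fderiv_fun_mul (((hrc γ i).differentiable (by simp)) x) (hwd i μ x)]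
    simp only [ContinuousLinearMap.add_apply, ContinuousLinearMap.smul_apply, smul_eq_mul]
    ring
  -- differentiating the PDE
  have hD0 : ∀ (γ : Fin N) (x : Fin n → ℝ) (j : Fin n),
      (0:ℝ) = fderiv ℝ (fun x => θc k γ (x, ybar x)) x (Pi.single j 1)
        + ∑ μ, ((∑ i, (fderiv ℝ (rc γ i) x (Pi.single j 1) * fderiv ℝ ybar x (Pi.single i 1) μ
              + rc γ i x * fderiv ℝ (fun x => fderiv ℝ ybar x (Pi.single i 1) μ) x
                  (Pi.single j 1)))
              * ϖc k μ (x, ybar x)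
          + (∑ i, rc γ i x * fderiv ℝ ybar x (Pi.single i 1) μ)
              * fderiv ℝ (fun x => ϖc k μ (x, ybar x)) x (Pi.single j 1)) := by
    intro γ x j
    have hfun : (fun x => θc k γ (x, ybar x)
        + ∑ μ, (∑ i, rc γ i x * fderiv ℝ ybar x (Pi.single i 1) μ) * ϖc k μ (x, ybar x))
        = fun _ => (0:ℝ) := funext fun x => hPDE k γ x
    have h0 : fderiv ℝ (fun x => θc k γ (x, ybar x)
        + ∑ μ, (∑ i, rc γ i x * fderiv ℝ ybar x (Pi.single i 1) μ) * ϖc k μ (x, ybar x)) x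
        (Pi.single j 1) = 0 := by rw [hfun]; simp
    calc (0:ℝ) = fderiv ℝ (fun x => θc k γ (x, ybar x)
          + ∑ μ, (∑ i, rc γ i x * fderiv ℝ ybar x (Pi.single i 1) μ) * ϖc k μ (x, ybar x)) x
          (Pi.single j 1) := h0.symm
      _ = _ := by
        rw [fderiv_fun_add (hcomp _ (hθ k γ) x)
          (DifferentiableAt.fun_sum fun μ _ => (hXyd γ μ x).fun_mul (hcomp _ (hϖ k μ) x)),
          ContinuousLinearMap.add_apply]
        congr 1
        rw [fderiv_fun_sum fun μ _ => (hXyd γ μ x).fun_mul (hcomp _ (hϖ k μ) x),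
          ContinuousLinearMap.sum_apply]
        refine Finset.sum_congr rfl fun μ _ => ?_
        rw [fderiv_fun_mul (hXyd γ μ x) (hcomp _ (hϖ k μ) x)]
        simp only [ContinuousLinearMap.add_apply, ContinuousLinearMap.smul_apply, smul_eq_mul]
        rw [hXyD γ μ x j]
        ring
  -- contraction with `ρ^j_δ`, using the chain rule
  have hYsum : ∀ (δ : Fin N) (g : Pt n m → ℝ), ContDiff ℝ (⊤ : ℕ∞) g → ∀ x : Fin n → ℝ,
      ∑ j, rc δ j x * fderiv ℝ (fun x => g (x, ybar x)) x (Pi.single j 1)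
      = (∑ i, rc δ i x * pdx g i (x, ybar x))
        + ∑ ν, (∑ i, rc δ i x * fderiv ℝ ybar x (Pi.single i 1) ν)
            * pdy g ν (x, ybar x) := by
    intro δ g hg x
    simp only [auxDC_chain hg hy]
    calc ∑ j, rc δ j x * (pdx g j (x, ybar x)
          + ∑ ν, fderiv ℝ ybar x (Pi.single j 1) ν * pdy g ν (x, ybar x))
        = ∑ j, (rc δ j x * pdx g j (x, ybar x)
            + ∑ ν, rc δ j x * (fderiv ℝ ybar x (Pi.single j 1) ν * pdy g ν (x, ybar x))) :=
          Finset.sum_congr rfl fun j _ => by rw [mul_add, Finset.mul_sum]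
      _ = (∑ j, rc δ j x * pdx g j (x, ybar x))
            + ∑ j, ∑ ν, rc δ j x * (fderiv ℝ ybar x (Pi.single j 1) ν
                * pdy g ν (x, ybar x)) := Finset.sum_add_distrib
      _ = _ := by
          congr 1
          rw [Finset.sum_comm]
          refine Finset.sum_congr rfl fun ν _ => ?_
          rw [Finset.sum_mul]
          exact Finset.sum_congr rfl fun j _ => by ring
  -- the contracted differentiated PDE
  have hE : ∀ δ γ : Fin N,
      (0:ℝ) = ((∑ i, rc δ i x₀ * pdx (θc k γ) i (x₀, ybar x₀))
            + ∑ ν, (∑ i, rc δ i x₀ * fderiv ℝ ybar x₀ (Pi.single i 1) ν)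
                * pdy (θc k γ) ν (x₀, ybar x₀))
          + (∑ μ, (∑ j, rc δ j x₀ *
              ∑ i, (fderiv ℝ (rc γ i) x₀ (Pi.single j 1) * fderiv ℝ ybar x₀ (Pi.single i 1) μ
                + rc γ i x₀ * fderiv ℝ (fun x => fderiv ℝ ybar x (Pi.single i 1) μ) x₀
                    (Pi.single j 1)))
              * ϖc k μ (x₀, ybar x₀))
          + ∑ μ, (∑ i, rc γ i x₀ * fderiv ℝ ybar x₀ (Pi.single i 1) μ)
              * ((∑ i, rc δ i x₀ * pdx (ϖc k μ) i (x₀, ybar x₀))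
                + ∑ ν, (∑ i, rc δ i x₀ * fderiv ℝ ybar x₀ (Pi.single i 1) ν)
                    * pdy (ϖc k μ) ν (x₀, ybar x₀)) := by
    intro δ γ
    have step : (0:ℝ) = ∑ j, rc δ j x₀ *
        (fderiv ℝ (fun x => θc k γ (x, ybar x)) x₀ (Pi.single j 1)
          + ∑ μ, ((∑ i, (fderiv ℝ (rc γ i) x₀ (Pi.single j 1)
                  * fderiv ℝ ybar x₀ (Pi.single i 1) μ
                + rc γ i x₀ * fderiv ℝ (fun x => fderiv ℝ ybar x (Pi.single i 1) μ) x₀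
                    (Pi.single j 1)))
              * ϖc k μ (x₀, ybar x₀)
            + (∑ i, rc γ i x₀ * fderiv ℝ ybar x₀ (Pi.single i 1) μ)
                * fderiv ℝ (fun x => ϖc k μ (x, ybar x)) x₀ (Pi.single j 1))) := by
      rw [Finset.sum_congr rfl fun j _ =>
        congrArg (fun t => rc δ j x₀ * t) (hD0 γ x₀ j).symm]
      simp
    rw [step]
    simp only [mul_add]
    rw [Finset.sum_add_distrib, hYsum δ (θc k γ) (hθ k γ) x₀]
    have hG : ∑ j, rc δ j x₀ * ∑ μ,
          ((∑ i, (fderiv ℝ (rc γ i) x₀ (Pi.single j 1) * fderiv ℝ ybar x₀ (Pi.single i 1) μ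
              + rc γ i x₀ * fderiv ℝ (fun x => fderiv ℝ ybar x (Pi.single i 1) μ) x₀
                  (Pi.single j 1)))
            * ϖc k μ (x₀, ybar x₀)
          + (∑ i, rc γ i x₀ * fderiv ℝ ybar x₀ (Pi.single i 1) μ)
              * fderiv ℝ (fun x => ϖc k μ (x, ybar x)) x₀ (Pi.single j 1))
        = (∑ μ, (∑ j, rc δ j x₀ *
              ∑ i, (fderiv ℝ (rc γ i) x₀ (Pi.single j 1) * fderiv ℝ ybar x₀ (Pi.single i 1) μ
                + rc γ i x₀ * fderiv ℝ (fun x => fderiv ℝ ybar x (Pi.single i 1) μ) x₀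
                    (Pi.single j 1)))
              * ϖc k μ (x₀, ybar x₀))
          + ∑ μ, (∑ i, rc γ i x₀ * fderiv ℝ ybar x₀ (Pi.single i 1) μ)
              * ((∑ i, rc δ i x₀ * pdx (ϖc k μ) i (x₀, ybar x₀))
                + ∑ ν, (∑ i, rc δ i x₀ * fderiv ℝ ybar x₀ (Pi.single i 1) ν)
                    * pdy (ϖc k μ) ν (x₀, ybar x₀)) := by
      calc ∑ j, rc δ j x₀ * ∑ μ,
            ((∑ i, (fderiv ℝ (rc γ i) x₀ (Pi.single j 1) * fderiv ℝ ybar x₀ (Pi.single i 1) μ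
                + rc γ i x₀ * fderiv ℝ (fun x => fderiv ℝ ybar x (Pi.single i 1) μ) x₀
                    (Pi.single j 1)))
              * ϖc k μ (x₀, ybar x₀)
            + (∑ i, rc γ i x₀ * fderiv ℝ ybar x₀ (Pi.single i 1) μ)
                * fderiv ℝ (fun x => ϖc k μ (x, ybar x)) x₀ (Pi.single j 1))
          = ∑ j, ∑ μ, rc δ j x₀ *
            ((∑ i, (fderiv ℝ (rc γ i) x₀ (Pi.single j 1) * fderiv ℝ ybar x₀ (Pi.single i 1) μ
                + rc γ i x₀ * fderiv ℝ (fun x => fderiv ℝ ybar x (Pi.single i 1) μ) x₀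
                    (Pi.single j 1)))
              * ϖc k μ (x₀, ybar x₀)
            + (∑ i, rc γ i x₀ * fderiv ℝ ybar x₀ (Pi.single i 1) μ)
                * fderiv ℝ (fun x => ϖc k μ (x, ybar x)) x₀ (Pi.single j 1)) :=
            Finset.sum_congr rfl fun j _ => Finset.mul_sum _ _ _
        _ = ∑ μ, ∑ j, rc δ j x₀ *
            ((∑ i, (fderiv ℝ (rc γ i) x₀ (Pi.single j 1) * fderiv ℝ ybar x₀ (Pi.single i 1) μ
                + rc γ i x₀ * fderiv ℝ (fun x => fderiv ℝ ybar x (Pi.single i 1) μ) x₀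
                    (Pi.single j 1)))
              * ϖc k μ (x₀, ybar x₀)
            + (∑ i, rc γ i x₀ * fderiv ℝ ybar x₀ (Pi.single i 1) μ)
                * fderiv ℝ (fun x => ϖc k μ (x, ybar x)) x₀ (Pi.single j 1)) := Finset.sum_comm
        _ = ∑ μ, ((∑ j, rc δ j x₀ *
              ∑ i, (fderiv ℝ (rc γ i) x₀ (Pi.single j 1) * fderiv ℝ ybar x₀ (Pi.single i 1) μ
                + rc γ i x₀ * fderiv ℝ (fun x => fderiv ℝ ybar x (Pi.single i 1) μ) x₀
                    (Pi.single j 1)))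
                * ϖc k μ (x₀, ybar x₀)
            + (∑ i, rc γ i x₀ * fderiv ℝ ybar x₀ (Pi.single i 1) μ)
                * ∑ j, rc δ j x₀
                    * fderiv ℝ (fun x => ϖc k μ (x, ybar x)) x₀ (Pi.single j 1)) := by
            refine Finset.sum_congr rfl fun μ _ => ?_
            calc ∑ j, rc δ j x₀ *
                ((∑ i, (fderiv ℝ (rc γ i) x₀ (Pi.single j 1)
                      * fderiv ℝ ybar x₀ (Pi.single i 1) μ
                    + rc γ i x₀ * fderiv ℝ (fun x => fderiv ℝ ybar x (Pi.single i 1) μ) x₀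
                        (Pi.single j 1)))
                  * ϖc k μ (x₀, ybar x₀)
                + (∑ i, rc γ i x₀ * fderiv ℝ ybar x₀ (Pi.single i 1) μ)
                    * fderiv ℝ (fun x => ϖc k μ (x, ybar x)) x₀ (Pi.single j 1))
                = ∑ j, ((rc δ j x₀ *
                    ∑ i, (fderiv ℝ (rc γ i) x₀ (Pi.single j 1)
                        * fderiv ℝ ybar x₀ (Pi.single i 1) μ
                      + rc γ i x₀ * fderiv ℝ (fun x => fderiv ℝ ybar x (Pi.single i 1) μ) x₀
                          (Pi.single j 1)))
                    * ϖc k μ (x₀, ybar x₀)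
                  + (∑ i, rc γ i x₀ * fderiv ℝ ybar x₀ (Pi.single i 1) μ)
                      * (rc δ j x₀
                        * fderiv ℝ (fun x => ϖc k μ (x, ybar x)) x₀ (Pi.single j 1))) :=
                  Finset.sum_congr rfl fun j _ => by ring
              _ = (∑ j, (rc δ j x₀ *
                    ∑ i, (fderiv ℝ (rc γ i) x₀ (Pi.single j 1)
                        * fderiv ℝ ybar x₀ (Pi.single i 1) μ
                      + rc γ i x₀ * fderiv ℝ (fun x => fderiv ℝ ybar x (Pi.single i 1) μ) x₀
                          (Pi.single j 1)))
                    * ϖc k μ (x₀, ybar x₀))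
                  + ∑ j, (∑ i, rc γ i x₀ * fderiv ℝ ybar x₀ (Pi.single i 1) μ)
                      * (rc δ j x₀
                        * fderiv ℝ (fun x => ϖc k μ (x, ybar x)) x₀ (Pi.single j 1)) :=
                  Finset.sum_add_distrib
              _ = _ := by
                  congr 1
                  · exact (Finset.sum_mul _ _ _).symm
                  · exact (Finset.mul_sum _ _ _).symm
        _ = _ := by
            rw [Finset.sum_add_distrib]
            congr 1
            exact Finset.sum_congr rfl fun μ _ => by rw [hYsum δ (ϖc k μ) (hϖ k μ) x₀]
    rw [hG]
    ring
  -- the antisymmetrized coefficient via the anchor identity and symmetry of 2nd derivatives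
  have hA : (∑ μ, (∑ j, rc α j x₀ *
        ∑ i, (fderiv ℝ (rc β i) x₀ (Pi.single j 1) * fderiv ℝ ybar x₀ (Pi.single i 1) μ
          + rc β i x₀ * fderiv ℝ (fun x => fderiv ℝ ybar x (Pi.single i 1) μ) x₀
              (Pi.single j 1)))
        * ϖc k μ (x₀, ybar x₀))
      - (∑ μ, (∑ j, rc β j x₀ *
        ∑ i, (fderiv ℝ (rc α i) x₀ (Pi.single j 1) * fderiv ℝ ybar x₀ (Pi.single i 1) μ
          + rc α i x₀ * fderiv ℝ (fun x => fderiv ℝ ybar x (Pi.single i 1) μ) x₀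
              (Pi.single j 1)))
        * ϖc k μ (x₀, ybar x₀))
      = - ∑ γ, L α β γ x₀ * θc k γ (x₀, ybar x₀) := by
    have hC : ∀ μ : Fin m,
        (∑ j, rc α j x₀ *
          ∑ i, (fderiv ℝ (rc β i) x₀ (Pi.single j 1) * fderiv ℝ ybar x₀ (Pi.single i 1) μ
            + rc β i x₀ * fderiv ℝ (fun x => fderiv ℝ ybar x (Pi.single i 1) μ) x₀
                (Pi.single j 1)))
        - (∑ j, rc β j x₀ *
          ∑ i, (fderiv ℝ (rc α i) x₀ (Pi.single j 1) * fderiv ℝ ybar x₀ (Pi.single i 1) μ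
            + rc α i x₀ * fderiv ℝ (fun x => fderiv ℝ ybar x (Pi.single i 1) μ) x₀
                (Pi.single j 1)))
        = ∑ γ, L α β γ x₀ * ∑ i, rc γ i x₀ * fderiv ℝ ybar x₀ (Pi.single i 1) μ := by
      intro μ
      -- split each double sum into the first-order and second-order parts
      have split : ∀ δ γ : Fin N,
          (∑ j, rc δ j x₀ *
            ∑ i, (fderiv ℝ (rc γ i) x₀ (Pi.single j 1) * fderiv ℝ ybar x₀ (Pi.single i 1) μ
              + rc γ i x₀ * fderiv ℝ (fun x => fderiv ℝ ybar x (Pi.single i 1) μ) x₀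
                  (Pi.single j 1)))
          = (∑ i, (∑ j, rc δ j x₀ * fderiv ℝ (rc γ i) x₀ (Pi.single j 1))
                * fderiv ℝ ybar x₀ (Pi.single i 1) μ)
            + ∑ j, ∑ i, rc δ j x₀ * rc γ i x₀
                * fderiv ℝ (fun x => fderiv ℝ ybar x (Pi.single i 1) μ) x₀ (Pi.single j 1) := by
        intro δ γ
        calc (∑ j, rc δ j x₀ *
              ∑ i, (fderiv ℝ (rc γ i) x₀ (Pi.single j 1) * fderiv ℝ ybar x₀ (Pi.single i 1) μ
                + rc γ i x₀ * fderiv ℝ (fun x => fderiv ℝ ybar x (Pi.single i 1) μ) x₀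
                    (Pi.single j 1)))
            = ∑ j, ((∑ i, rc δ j x₀ * fderiv ℝ (rc γ i) x₀ (Pi.single j 1)
                  * fderiv ℝ ybar x₀ (Pi.single i 1) μ)
                + ∑ i, rc δ j x₀ * rc γ i x₀
                  * fderiv ℝ (fun x => fderiv ℝ ybar x (Pi.single i 1) μ) x₀ (Pi.single j 1)) := by
              refine Finset.sum_congr rfl fun j _ => ?_
              rw [Finset.mul_sum, ← Finset.sum_add_distrib]
              exact Finset.sum_congr rfl fun i _ => by ring
          _ = (∑ j, ∑ i, rc δ j x₀ * fderiv ℝ (rc γ i) x₀ (Pi.single j 1)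
                  * fderiv ℝ ybar x₀ (Pi.single i 1) μ)
              + ∑ j, ∑ i, rc δ j x₀ * rc γ i x₀
                  * fderiv ℝ (fun x => fderiv ℝ ybar x (Pi.single i 1) μ) x₀ (Pi.single j 1) :=
              Finset.sum_add_distrib
          _ = _ := by
              congr 1
              rw [Finset.sum_comm]
              refine Finset.sum_congr rfl fun i _ => ?_
              rw [Finset.sum_mul]
      rw [split α β, split β α]
      -- the second-order parts coincide
      have hsecond : (∑ j, ∑ i, rc α j x₀ * rc β i x₀
            * fderiv ℝ (fun x => fderiv ℝ ybar x (Pi.single i 1) μ) x₀ (Pi.single j 1))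
          = ∑ j, ∑ i, rc β j x₀ * rc α i x₀
            * fderiv ℝ (fun x => fderiv ℝ ybar x (Pi.single i 1) μ) x₀ (Pi.single j 1) := by
        rw [Finset.sum_comm]
        refine Finset.sum_congr rfl fun i _ => ?_
        refine Finset.sum_congr rfl fun j _ => ?_
        rw [auxDC_symm hy x₀ (Pi.single i 1) (Pi.single j 1) μ]
        ring
      rw [hsecond]
      have hfirst : (∑ i, (∑ j, rc α j x₀ * fderiv ℝ (rc β i) x₀ (Pi.single j 1))
            * fderiv ℝ ybar x₀ (Pi.single i 1) μ)
          - (∑ i, (∑ j, rc β j x₀ * fderiv ℝ (rc α i) x₀ (Pi.single j 1))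
            * fderiv ℝ ybar x₀ (Pi.single i 1) μ)
          = ∑ i, (∑ γ, rc γ i x₀ * L α β γ x₀) * fderiv ℝ ybar x₀ (Pi.single i 1) μ := by
        rw [← Finset.sum_sub_distrib]
        refine Finset.sum_congr rfl fun i _ => ?_
        rw [hanchor α β i x₀]
        ring
      calc (∑ i, (∑ j, rc α j x₀ * fderiv ℝ (rc β i) x₀ (Pi.single j 1))
              * fderiv ℝ ybar x₀ (Pi.single i 1) μ
            + ∑ j, ∑ i, rc β j x₀ * rc α i x₀
              * fderiv ℝ (fun x => fderiv ℝ ybar x (Pi.single i 1) μ) x₀ (Pi.single j 1))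
          - ((∑ i, (∑ j, rc β j x₀ * fderiv ℝ (rc α i) x₀ (Pi.single j 1))
              * fderiv ℝ ybar x₀ (Pi.single i 1) μ)
            + ∑ j, ∑ i, rc β j x₀ * rc α i x₀
              * fderiv ℝ (fun x => fderiv ℝ ybar x (Pi.single i 1) μ) x₀ (Pi.single j 1))
          = (∑ i, (∑ j, rc α j x₀ * fderiv ℝ (rc β i) x₀ (Pi.single j 1))
              * fderiv ℝ ybar x₀ (Pi.single i 1) μ)
            - ∑ i, (∑ j, rc β j x₀ * fderiv ℝ (rc α i) x₀ (Pi.single j 1))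
              * fderiv ℝ ybar x₀ (Pi.single i 1) μ := by ring
        _ = ∑ i, (∑ γ, rc γ i x₀ * L α β γ x₀) * fderiv ℝ ybar x₀ (Pi.single i 1) μ := hfirst
        _ = ∑ i, ∑ γ, rc γ i x₀ * L α β γ x₀ * fderiv ℝ ybar x₀ (Pi.single i 1) μ := by
            exact Finset.sum_congr rfl fun i _ => Finset.sum_mul _ _ _
        _ = ∑ γ, ∑ i, rc γ i x₀ * L α β γ x₀ * fderiv ℝ ybar x₀ (Pi.single i 1) μ :=
            Finset.sum_comm
        _ = _ := by
            refine Finset.sum_congr rfl fun γ _ => ?_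
            rw [Finset.mul_sum]
            exact Finset.sum_congr rfl fun i _ => by ring
    calc (∑ μ, (∑ j, rc α j x₀ *
          ∑ i, (fderiv ℝ (rc β i) x₀ (Pi.single j 1) * fderiv ℝ ybar x₀ (Pi.single i 1) μ
            + rc β i x₀ * fderiv ℝ (fun x => fderiv ℝ ybar x (Pi.single i 1) μ) x₀
                (Pi.single j 1)))
          * ϖc k μ (x₀, ybar x₀))
        - (∑ μ, (∑ j, rc β j x₀ *
          ∑ i, (fderiv ℝ (rc α i) x₀ (Pi.single j 1) * fderiv ℝ ybar x₀ (Pi.single i 1) μ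
            + rc α i x₀ * fderiv ℝ (fun x => fderiv ℝ ybar x (Pi.single i 1) μ) x₀
                (Pi.single j 1)))
          * ϖc k μ (x₀, ybar x₀))
        = ∑ μ, (∑ γ, L α β γ x₀ * ∑ i, rc γ i x₀ * fderiv ℝ ybar x₀ (Pi.single i 1) μ)
            * ϖc k μ (x₀, ybar x₀) := by
          rw [← Finset.sum_sub_distrib]
          refine Finset.sum_congr rfl fun μ _ => ?_
          rw [← sub_mul, hC μ]
      _ = ∑ μ, ∑ γ, L α β γ x₀ * ((∑ i, rc γ i x₀ * fderiv ℝ ybar x₀ (Pi.single i 1) μ)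
            * ϖc k μ (x₀, ybar x₀)) := by
          refine Finset.sum_congr rfl fun μ _ => ?_
          rw [Finset.sum_mul]
          exact Finset.sum_congr rfl fun γ _ => by ring
      _ = ∑ γ, L α β γ x₀ * ∑ μ, (∑ i, rc γ i x₀ * fderiv ℝ ybar x₀ (Pi.single i 1) μ)
            * ϖc k μ (x₀, ybar x₀) := by
          rw [Finset.sum_comm]
          exact Finset.sum_congr rfl fun γ _ => (Finset.mul_sum _ _ _).symm
      _ = ∑ γ, L α β γ x₀ * (- θc k γ (x₀, ybar x₀)) := by
          refine Finset.sum_congr rfl fun γ _ => ?_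
          have := hPDE k γ x₀
          congr 1
          linarith
      _ = - ∑ γ, L α β γ x₀ * θc k γ (x₀, ybar x₀) := by
          rw [← Finset.sum_neg_distrib]
          exact Finset.sum_congr rfl fun γ _ => by ring
  have h1 := hE α β
  have h2 := hE β α
  linarith [h1, h2, hA]
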